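/- arXiv:2005.12025 — 2 statements merged into one kernel-verified Lean document; each statement's English description precedes it below -/
import Mathlib

section
/- Assume s < 0. Let W ⊆ V be such that (B₁ ∪ B₂) ∩ W ≠ ∅ and (B₃ ∪ C) ∩ W ≠ ∅. Then the affine dimension of P((B₃ ∪ C) ∩ W) is at most the affine dimension of P(W) minus one. -/
open scoped RealInnerProductSpace

/-- The `i`-th column of `y = A - s·I`, where `A` is the real adjacency matrix of `G`,
viewed as a point of Euclidean space `ℝ^V`. -/
noncomputable def srgCol {V : Type*} [Fintype V] [DecidableEq V]
    (G : SimpleGraph V) [DecidableRel G.Adj] (s : ℝ) (i : V) : EuclideanSpace ℝ V :=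
  (WithLp.equiv 2 (V → ℝ)).symm fun j => (G.adjMatrix ℝ - s • (1 : Matrix V V ℝ)) j i


/-- The affine dimension of a point set: the finrank of the direction of its affine span. -/
noncomputable def adim {V : Type*} [Fintype V] (X : Set (EuclideanSpace ℝ V)) : ℕ :=
  Module.finrank ℝ (affineSpan ℝ X).direction


/-- `nN G i U` is the number of neighbours of `i` lying in `U`. -/
noncomputable def nN {V : Type*} (G : SimpleGraph V) (i : V) (U : Set V) : ℕ :=
  {j ∈ U | G.Adj i j}.ncard

/-
The functional `φ x = ∑_{j ∈ B₁} x_j - ∑_{j ∈ B₂} x_j` takes the value `|N(i) ∩ B₁| - |N(i) ∩ B₂|`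
at the column `y_i` of a vertex `i ∉ B₁ ∪ B₂`; this vanishes on `B₃` (no edges to `B₁ ∪ B₂`) and on `C`
(equal counts). At a column `y_i` with `i ∈ B₁` it equals `|N(i) ∩ B₁| - s > 0`, and symmetrically it
is negative on `B₂`. So the affine span of `P((B₃ ∪ C) ∩ W)` lies in the hyperplane `φ = 0`, which
misses a point of `P(W)`, and the dimension drops.
-/

theorem finrank_direction_affineSpan_lt_of_map_eq_of_map_ne {k V₁ P₁ V₂ P₂ : Type*} [Field k]
    [AddCommGroup V₁] [Module k V₁] [AddTorsor V₁ P₁] [FiniteDimensional k V₁]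
    [AddCommGroup V₂] [Module k V₂] [AddTorsor V₂ P₂]
    (f : P₁ →ᵃ[k] P₂) {X Y : Set P₁} (hXY : X ⊆ Y) {p q : P₁} (hp : p ∈ X) (hq : q ∈ Y)
    (hX : ∀ x ∈ X, f x = f p) (hfq : f q ≠ f p) :
    Module.finrank k (affineSpan k X).direction < Module.finrank k (affineSpan k Y).direction := by
  have hq_notMem : q ∉ affineSpan k X := fun hqX => by
    have hfX : f '' X ⊆ {f p} := by rintro _ ⟨x, hx, rfl⟩; exact hX x hx
    have : f q ∈ affineSpan k ({f p} : Set P₂) :=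
      affineSpan_mono k hfX (AffineSubspace.map_span f X ▸ AffineSubspace.mem_map_of_mem f hqX)
    exact hfq ((AffineSubspace.mem_affineSpan_singleton k V₂).1 this)
  have hlt : affineSpan k X < affineSpan k Y :=
    lt_of_le_of_ne (affineSpan_mono k hXY) fun h => hq_notMem (h ▸ mem_affineSpan k hq)
  exact Submodule.finrank_lt_finrank_of_lt
    (AffineSubspace.direction_lt_of_nonempty hlt ⟨p, mem_affineSpan k hp⟩)

section coordSum

variable {V : Type*}

theorem nN_eq_zero_of_forall_not_adj (G : SimpleGraph V) {i : V} {U : Set V}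
    (h : ∀ j ∈ U, ¬G.Adj i j) : nN G i U = 0 := by
  have : {j ∈ U | G.Adj i j} = ∅ := Set.eq_empty_of_forall_notMem fun j hj => h j hj.1 hj.2
  simp [nN, this]

variable [Fintype V]

noncomputable def coordSum (U : Set V) : EuclideanSpace ℝ V →ₗ[ℝ] ℝ where
  toFun x := ∑ j, U.indicator 1 j * x j
  map_add' x y := by simp [mul_add, Finset.sum_add_distrib]
  map_smul' r x := by simp [Finset.mul_sum, mul_left_comm]

variable (G : SimpleGraph V) [DecidableRel G.Adj]

theorem nN_eq_sum_indicator_mul_adj (i : V) (U : Set V) :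
    (nN G i U : ℝ) = ∑ j, U.indicator 1 j * (if G.Adj j i then (1 : ℝ) else 0) := by
  classical
  simp only [Set.indicator_apply, Pi.one_apply, boole_mul, ← ite_and, Finset.sum_boole]
  simp [nN, Set.ncard_eq_toFinset_card', G.adj_comm]

variable [DecidableEq V] (s : ℝ)

theorem coordSum_srgCol (U : Set V) (i : V) :
    coordSum U (srgCol G s i) = nN G i U - s * U.indicator 1 i := by
  simp [coordSum, srgCol, Matrix.one_apply, SimpleGraph.adjMatrix_apply,
    nN_eq_sum_indicator_mul_adj, mul_sub, Finset.sum_sub_distrib, mul_comm s]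

variable {G s}

theorem coordSum_sub_coordSum_srgCol_eq_zero {U U' : Set V} {i : V} (hU : i ∉ U) (hU' : i ∉ U')
    (h : nN G i U = nN G i U') : coordSum U (srgCol G s i) - coordSum U' (srgCol G s i) = 0 := by
  simp [coordSum_srgCol, hU, hU', h]

theorem coordSum_sub_coordSum_srgCol_pos (hs : s < 0) {U U' : Set V} {i : V} (hU : i ∈ U)
    (hU' : i ∉ U') (hadj : ∀ j ∈ U', ¬G.Adj i j) :
    0 < coordSum U (srgCol G s i) - coordSum U' (srgCol G s i) := by
  simp only [coordSum_srgCol, nN_eq_zero_of_forall_not_adj G hadj, Set.indicator_of_mem hU,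
    Set.indicator_of_notMem hU', Pi.one_apply, Nat.cast_zero, mul_one, mul_zero]
  have : (0 : ℝ) ≤ nN G i U := Nat.cast_nonneg _
  linarith

end coordSum

theorem stmt_11_general {V : Type*} [Fintype V] [DecidableEq V]
    (G : SimpleGraph V) [DecidableRel G.Adj]
    (s : ℝ) (hs : s < 0)
    (B₁ B₂ B₃ C : Set V)
    (hd₁₂ : Disjoint B₁ B₂) (hd₁₃ : Disjoint B₁ B₃) (hd₁C : Disjoint B₁ C)
    (hd₂₃ : Disjoint B₂ B₃) (hd₂C : Disjoint B₂ C)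
    (hB₁₂ : ∀ i ∈ B₁, ∀ j ∈ B₂, ¬G.Adj i j)
    (hB₁₃ : ∀ i ∈ B₁, ∀ j ∈ B₃, ¬G.Adj i j)
    (hB₂₃ : ∀ i ∈ B₂, ∀ j ∈ B₃, ¬G.Adj i j)
    (hC : ∀ i ∈ C, nN G i B₁ = nN G i B₂ ∧ nN G i B₂ = nN G i B₃)
    (W : Set V)
    (hW₁ : ((B₁ ∪ B₂) ∩ W).Nonempty) (hW₂ : ((B₃ ∪ C) ∩ W).Nonempty) :
    adim (srgCol G s '' ((B₃ ∪ C) ∩ W)) + 1 ≤ adim (srgCol G s '' W) := by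
  set φ := coordSum B₁ - coordSum B₂
  have hφX : ∀ i ∈ B₃ ∪ C, φ (srgCol G s i) = 0 := by
    rintro i (hi | hi)
    · refine coordSum_sub_coordSum_srgCol_eq_zero (hd₁₃.notMem_of_mem_right hi)
        (hd₂₃.notMem_of_mem_right hi) ?_
      rw [nN_eq_zero_of_forall_not_adj G fun j hj hij => hB₁₃ j hj i hi hij.symm,
        nN_eq_zero_of_forall_not_adj G fun j hj hij => hB₂₃ j hj i hi hij.symm]
    · exact coordSum_sub_coordSum_srgCol_eq_zero (hd₁C.notMem_of_mem_right hi)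
        (hd₂C.notMem_of_mem_right hi) (hC i hi).1
  have hφY : ∀ i ∈ B₁ ∪ B₂, φ (srgCol G s i) ≠ 0 := by
    rintro i (hi | hi)
    · exact (coordSum_sub_coordSum_srgCol_pos hs hi (hd₁₂.notMem_of_mem_left hi) (hB₁₂ i hi)).ne'
    · have := coordSum_sub_coordSum_srgCol_pos hs hi (hd₁₂.notMem_of_mem_right hi)
        fun j hj hij => hB₁₂ j hj i hi hij.symm
      exact (sub_neg.2 (sub_pos.1 this)).ne
  obtain ⟨p, hp⟩ := hW₂
  obtain ⟨q, hq⟩ := hW₁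
  exact finrank_direction_affineSpan_lt_of_map_eq_of_map_ne φ.toAffineMap
    (Set.image_mono Set.inter_subset_right) (Set.mem_image_of_mem _ hp)
    (Set.mem_image_of_mem _ hq.2) (by rintro _ ⟨i, hi, rfl⟩; simp [hφX i hi.1, hφX p hp.1])
    (by simpa [hφX p hp.1] using hφY q hq.1)

theorem stmt_11 {V : Type*} [Fintype V] [DecidableEq V]
    (G : SimpleGraph V) [DecidableRel G.Adj] (v k l m : ℕ)
    (hG : G.IsSRGWith v k l m) (s : ℝ) (hs : s < 0)
    (B₁ B₂ B₃ C : Set V)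
    (hcover : B₁ ∪ B₂ ∪ B₃ ∪ C = Set.univ)
    (hd₁₂ : Disjoint B₁ B₂) (hd₁₃ : Disjoint B₁ B₃) (hd₁C : Disjoint B₁ C)
    (hd₂₃ : Disjoint B₂ B₃) (hd₂C : Disjoint B₂ C) (hd₃C : Disjoint B₃ C)
    (hB₁₂ : ∀ i ∈ B₁, ∀ j ∈ B₂, ¬G.Adj i j)
    (hB₁₃ : ∀ i ∈ B₁, ∀ j ∈ B₃, ¬G.Adj i j)
    (hB₂₃ : ∀ i ∈ B₂, ∀ j ∈ B₃, ¬G.Adj i j)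
    (hC : ∀ i ∈ C, nN G i B₁ = nN G i B₂ ∧ nN G i B₂ = nN G i B₃)
    (W : Set V)
    (hW₁ : ((B₁ ∪ B₂) ∩ W).Nonempty) (hW₂ : ((B₃ ∪ C) ∩ W).Nonempty) :
    adim (srgCol G s '' ((B₃ ∪ C) ∩ W)) + 1 ≤ adim (srgCol G s '' W) :=
  stmt_11_general G s hs B₁ B₂ B₃ C hd₁₂ hd₁₃ hd₁C hd₂₃ hd₂C hB₁₂ hB₁₃ hB₂₃ hC W hW₁ hW₂
end

section
/- Assume μ ≥ 1, Γ has at least one edge, and Γ has at least one pair of distinct non-adjacent vertices. Let s = (λ − μ − √((λ−μ)² + 4(k−μ)))/2, y = A − s·I, and let f be the natural number with (f : ℝ) = (v − 1 − (2k + (v−1)(λ−μ))/√((λ−μ)² + 4(k−μ)))/2, assuming such f exists. If V is not the union of f + 1 cliques of Γ, then the finite point set P(V) ⊆ ℝ^V has affine dimension f and cannot be written as a union of f + 1 subsets each of diameter strictly smaller than the diameter of P(V); that is, P(V) is a counterexample to Borsuk's conjecture in dimension f. -/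
open scoped RealInnerProductSpace

/-!
Let `M = A - sI`, where `s` is the smaller root of `x² - (λ - μ) x - (k - μ)` and
`d = √((λ - μ)² + 4 (k - μ))` its distance to the larger root `r`. The identity
`A² = kI + λA + μ(J - I - A)` becomes `M² = dM + μJ`. As `M²` is the Gram matrix of the points
`y_i`, distinct points are at squared distance `-2d (s + A_ij)`: the diameter of `P(V)` is attained
exactly at the non-adjacent pairs, so a piece of smaller diameter comes from a clique.
For the dimension, centre the columns: `N = M - ((k - s) / v) J` satisfies `N² = dN` because
`vμ = (k - r)(k - s)` (the relation `k(k - λ - 1) = (v - k - 1)μ`). Hence `N / d` is idempotent,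
and the affine dimension of `P(V)` is `rank N = tr N / d = (-s (v - 1) - k) / d = f`.
-/

open Matrix Finset

section LinearAlgebra

variable {𝕜 : Type*} [Field 𝕜]

open scoped Pointwise in
theorem vectorSpan_range_add_const_of_sum_eq_zero [CharZero 𝕜] {ι E : Type*} [AddCommGroup E]
    [Module 𝕜 E] [Fintype ι] [Nonempty ι] {q : ι → E} (hq : ∑ i, q i = 0) (w : E) :
    vectorSpan 𝕜 (Set.range fun i => q i + w) = Submodule.span 𝕜 (Set.range q) := by
  have htrans : (Set.range fun i => q i + w) = w +ᵥ Set.range q := by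
    rw [← Set.image_vadd, ← Set.range_comp]; congr 1; funext i; exact add_comm _ _
  rw [htrans, vectorSpan_vadd]
  refine le_antisymm (Submodule.span_le.2 ?_) (Submodule.span_le.2 ?_)
  · rintro _ ⟨_, ⟨i, rfl⟩, _, ⟨j, rfl⟩, rfl⟩
    exact sub_mem (Submodule.subset_span ⟨i, rfl⟩) (Submodule.subset_span ⟨j, rfl⟩)
  · rintro _ ⟨i, rfl⟩
    have hcard : (Fintype.card ι : 𝕜) ≠ 0 := Nat.cast_ne_zero.2 Fintype.card_ne_zero
    have hqi : q i = (Fintype.card ι : 𝕜)⁻¹ • ∑ j, (q i -ᵥ q j) := by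
      simp only [vsub_eq_sub, sum_sub_distrib, hq, sub_zero, sum_const, card_univ,
        ← Nat.cast_smul_eq_nsmul 𝕜, smul_smul, inv_mul_cancel₀ hcard, one_smul]
    rw [hqi]
    exact Submodule.smul_mem _ _ (Submodule.sum_mem _ fun j _ =>
      vsub_mem_vectorSpan 𝕜 ⟨i, rfl⟩ ⟨j, rfl⟩)

variable {n : Type*} [Fintype n]

theorem Matrix.rank_eq_trace_of_isIdempotentElem [DecidableEq n] {P : Matrix n n 𝕜}
    (hP : IsIdempotentElem P) :
    (P.rank : 𝕜) = P.trace := by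
  have hproj : IsIdempotentElem P.mulVecLin := by
    rw [IsIdempotentElem, Module.End.mul_eq_comp, ← Matrix.mulVecLin_mul, hP.eq]
  rw [Matrix.rank, ← (LinearMap.IsIdempotentElem.isProj_range _ hproj).trace,
    ← Matrix.trace_toLin'_eq]
  rfl

theorem Matrix.rank_eq_inv_mul_trace_of_mul_self_eq_smul [DecidableEq n] {N : Matrix n n 𝕜}
    {d : 𝕜} (hd : d ≠ 0) (hN : N * N = d • N) : (N.rank : 𝕜) = d⁻¹ * N.trace := by
  have hP : IsIdempotentElem (d⁻¹ • N) := by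
    rw [IsIdempotentElem, smul_mul_smul_comm, hN, smul_smul, mul_assoc, inv_mul_cancel₀ hd,
      mul_one]
  have hlin : (d⁻¹ • N).mulVecLin = d⁻¹ • N.mulVecLin := by
    ext : 1; simp
  rw [← smul_eq_mul, ← trace_smul, ← rank_eq_trace_of_isIdempotentElem hP, Matrix.rank,
    Matrix.rank, hlin, LinearMap.range_smul _ _ (inv_ne_zero hd)]

theorem finrank_vectorSpan_range_col_add_const [CharZero 𝕜] [Nonempty n] {N : Matrix n n 𝕜}
    (hN : N *ᵥ 1 = 0) (w : n → 𝕜) :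
    Module.finrank 𝕜 (vectorSpan 𝕜 (Set.range fun i => N.col i + w)) = N.rank := by
  have hsum : ∑ i, N.col i = 0 := by
    rw [← hN]; ext j; simp [Finset.sum_apply, mulVec, dotProduct]
  rw [vectorSpan_range_add_const_of_sum_eq_zero hsum, rank_eq_finrank_span_cols]

end LinearAlgebra

theorem Matrix.of_one_mul_of_one {n α : Type*} [Fintype n] [NonAssocSemiring α] :
    (of 1 : Matrix n n α) * of 1 = (Fintype.card n : α) • of 1 := by
  ext; simp [mul_apply]

theorem Matrix.sub_smul_of_one_mul_self {n R : Type*} [Fintype n] [CommRing R] {M : Matrix n n R}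
    {d μ e c : R} (hMM : M * M = d • M + μ • of 1) (hMJ : M * of 1 = e • of 1)
    (hJM : of 1 * M = e • of 1) (hc : c * Fintype.card n = e) (hμ : μ = c * (e - d)) :
    (M - c • of 1) * (M - c • of 1) = d • (M - c • of 1) := by
  simp only [sub_mul, mul_sub, Matrix.smul_mul, Matrix.mul_smul, hMM, hMJ, hJM, of_one_mul_of_one,
    smul_smul]
  match_scalars
  · ring
  · linear_combination hμ + c * hc

namespace SimpleGraph

variable {V : Type*} [Fintype V] {G : SimpleGraph V} [DecidableRel G.Adj]

theorem IsRegularOfDegree.adjMatrix_mul_of_one {α : Type*} [NonAssocSemiring α] {k : ℕ}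
    (hG : G.IsRegularOfDegree k) : G.adjMatrix α * of 1 = (k : α) • of 1 := by
  ext i j
  simp [adjMatrix_mul_apply, hG i]

theorem IsRegularOfDegree.of_one_mul_adjMatrix {α : Type*} [NonAssocSemiring α] {k : ℕ}
    (hG : G.IsRegularOfDegree k) : of 1 * G.adjMatrix α = (k : α) • of 1 := by
  ext i j
  simp [mul_adjMatrix_apply, hG j]

variable {v k l m : ℕ}

theorem IsSRGWith.lt_of_adj (hG : G.IsSRGWith v k l m) {i j : V} (h : G.Adj i j) : l < k := by
  simpa [hG.of_adj i j h, hG.regular i] using h.card_commonNeighbors_lt_degree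

theorem IsSRGWith.le_of_not_adj (hG : G.IsSRGWith v k l m) {i j : V} (hij : i ≠ j)
    (h : ¬G.Adj i j) : m ≤ k := by
  simpa [hG.of_not_adj hij h, hG.regular i] using G.card_commonNeighbors_le_degree_left i j

theorem IsSRGWith.param_eq_real (hG : G.IsSRGWith v k l m) {i j : V} (h : G.Adj i j) :
    (k : ℝ) * (k - l - 1) = (v - k - 1) * m := by
  have hlk := hG.lt_of_adj h
  have hkv : k < v := hG.card ▸ hG.regular i ▸ G.degree_lt_card_verts i
  have := congrArg (Nat.cast : ℕ → ℝ) (hG.param_eq G (by omega))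
  push_cast [Nat.sub_sub, Nat.cast_sub (show l + 1 ≤ k by omega),
    Nat.cast_sub (show k + 1 ≤ v by omega)] at this
  linarith

theorem IsSRGWith.discr_pos (hG : G.IsSRGWith v k l m) {i j i' j' : V} (h : G.Adj i j)
    (hij' : i' ≠ j') (h' : ¬G.Adj i' j') : 0 < ((l : ℝ) - m) ^ 2 + 4 * ((k : ℝ) - m) := by
  have hlk : (l : ℝ) + 1 ≤ k := by exact_mod_cast hG.lt_of_adj h
  have hmk : (m : ℝ) ≤ k := by exact_mod_cast hG.le_of_not_adj hij' h'
  nlinarith [sq_nonneg ((l : ℝ) - m + 1)]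

variable [DecidableEq V]

theorem IsSRGWith.adjMatrix_mul_self {α : Type*} [Ring α] [DecidableEq α]
    (hG : G.IsSRGWith v k l m) :
    G.adjMatrix α * G.adjMatrix α =
      k • (1 : Matrix V V α) + l • G.adjMatrix α + m • (of 1 - 1 - G.adjMatrix α) := by
  rw [← sq, hG.matrix_eq, ← G.compl_adjMatrix_eq_adjMatrix_compl α,
    ← G.one_add_adjMatrix_add_compl_adjMatrix_eq_of_one α]
  congr 2
  abel

theorem IsSRGWith.sub_smul_one_mul_self (hG : G.IsSRGWith v k l m) {s : ℝ}
    (hs : s ^ 2 = (l - m) * s + (k - m)) :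
    (G.adjMatrix ℝ - s • 1) * (G.adjMatrix ℝ - s • 1) =
      ((l : ℝ) - m - 2 * s) • (G.adjMatrix ℝ - s • 1) + (m : ℝ) • of 1 := by
  simp only [sub_mul, mul_sub, Matrix.smul_mul, Matrix.mul_smul, mul_one, one_mul, smul_smul,
    hG.adjMatrix_mul_self, ← Nat.cast_smul_eq_nsmul ℝ]
  match_scalars
  · linear_combination -hs
  · ring
  · ring

theorem IsSRGWith.finrank_vectorSpan_range_col [Nonempty V] (hG : G.IsSRGWith v k l m)
    {i j : V} (h : G.Adj i j) {s : ℝ} (hs : s ^ 2 = (l - m) * s + (k - m))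
    (hd : (l : ℝ) - m - 2 * s ≠ 0) :
    (Module.finrank ℝ (vectorSpan ℝ (Set.range (G.adjMatrix ℝ - s • 1).col)) : ℝ) =
      (-(s * (v - 1)) - k) / (l - m - 2 * s) := by
  set M := G.adjMatrix ℝ - s • 1
  set c := ((k : ℝ) - s) / v
  have hv : (v : ℝ) ≠ 0 := by
    rw [← hG.card]; exact Nat.cast_ne_zero.2 Fintype.card_ne_zero
  have hc : c * Fintype.card V = k - s := by rw [hG.card]; exact div_mul_cancel₀ _ hv
  have hMJ : M * of 1 = ((k : ℝ) - s) • of 1 := by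
    rw [sub_mul, hG.regular.adjMatrix_mul_of_one, Matrix.smul_mul, one_mul, sub_smul]
  have hJM : of 1 * M = ((k : ℝ) - s) • of 1 := by
    rw [mul_sub, hG.regular.of_one_mul_adjMatrix, Matrix.mul_smul, mul_one, sub_smul]
  have hm : (m : ℝ) = c * ((k - s) - (l - m - 2 * s)) := by
    rw [div_mul_eq_mul_div, eq_div_iff hv]
    linear_combination -hG.param_eq_real h + hs
  have hN := sub_smul_of_one_mul_self (hG.sub_smul_one_mul_self hs) hMJ hJM hc hm
  have hN1 : (M - c • of 1) *ᵥ 1 = 0 := by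
    have hNJ : (M - c • of 1) * of 1 = 0 := by
      rw [sub_mul, hMJ, Matrix.smul_mul, of_one_mul_of_one, smul_smul, hc, sub_self]
    ext i
    simpa [mul_apply, mulVec, dotProduct] using congrFun (congrFun hNJ i) i
  have hcol : M.col = fun i => (M - c • of 1).col i + fun _ => c := by
    ext i j; simp
  have htrace : (M - c • of 1).trace = -(s * (v - 1)) - k := by
    simp only [M, trace_sub, trace_smul, trace_one, trace_adjMatrix]
    have hJ : (of 1 : Matrix V V ℝ).trace = Fintype.card V := by simp [trace]
    rw [hJ, smul_eq_mul, smul_eq_mul, hc, hG.card]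
    ring
  rw [hcol, finrank_vectorSpan_range_col_add_const hN1,
    Matrix.rank_eq_inv_mul_trace_of_mul_self_eq_smul hd hN, htrace, inv_mul_eq_div]

end SimpleGraph

theorem exists_isClique_cover_of_diam_lt {V ι E : Type*} [PseudoMetricSpace E] [Finite V]
    (G : SimpleGraph V) {p : V → E}
    (hp : ∀ i j, i ≠ j → ¬G.Adj i j → dist (p i) (p j) = Metric.diam (Set.range p))
    {F : ι → Set E} (hF : Set.range p = ⋃ a, F a)
    (hFd : ∀ a, Metric.diam (F a) < Metric.diam (Set.range p)) :
    ∃ Q : ι → Set V, Set.univ = ⋃ a, Q a ∧ ∀ a, G.IsClique (Q a) := by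
  refine ⟨fun a => p ⁻¹' F a, ?_, fun a i hi j hj hij => ?_⟩
  · rw [← Set.preimage_iUnion, ← hF, Set.preimage_range]
  · by_contra hna
    have hbdd : Bornology.IsBounded (F a) :=
      (Set.finite_range p).isBounded.subset (hF ▸ Set.subset_iUnion F a)
    exact (hFd a).not_ge (hp i j hij hna ▸ Metric.dist_le_diam_of_mem hbdd hi hj)

section SrgCol

variable {V : Type*} [Fintype V] [DecidableEq V]

theorem adim_range_srgCol (G : SimpleGraph V) [DecidableRel G.Adj] (s : ℝ) :
    adim (Set.range (srgCol G s)) =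
      Module.finrank ℝ (vectorSpan ℝ (Set.range (G.adjMatrix ℝ - s • 1).col)) := by
  let e := (WithLp.linearEquiv 2 ℝ (V → ℝ)).symm
  have hrange : Set.range (srgCol G s) = e '' Set.range (G.adjMatrix ℝ - s • 1).col := by
    rw [← Set.range_comp]; rfl
  have hmap := AffineMap.map_vectorSpan e.toLinearMap.toAffineMap
    (s := Set.range (G.adjMatrix ℝ - s • 1).col)
  rw [adim, direction_affineSpan, hrange]
  simp only [LinearMap.toAffineMap_linear, LinearMap.coe_toAffineMap, LinearEquiv.coe_coe] at hmap
  rw [← hmap]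
  exact e.finrank_map_eq _

theorem real_inner_srgCol (G : SimpleGraph V) [DecidableRel G.Adj] (s : ℝ) (i j : V) :
    ⟪srgCol G s i, srgCol G s j⟫ =
      ((G.adjMatrix ℝ - s • 1) * (G.adjMatrix ℝ - s • 1)) i j := by
  have hM : (G.adjMatrix ℝ - s • 1).IsSymm := G.isSymm_adjMatrix.sub (isSymm_one.smul s)
  rw [mul_apply]
  simp only [srgCol, PiLp.inner_apply]
  refine sum_congr rfl fun p _ => ?_
  rw [RCLike.inner_apply', conj_trivial, hM.apply]
  rfl

variable {G : SimpleGraph V} [DecidableRel G.Adj] {v k l m : ℕ}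

theorem dist_sq_srgCol_of_isSRGWith (hG : G.IsSRGWith v k l m) {s : ℝ}
    (hs : s ^ 2 = (l - m) * s + (k - m)) {i j : V} (hij : i ≠ j) :
    dist (srgCol G s i) (srgCol G s j) ^ 2 = -2 * (l - m - 2 * s) * (s + G.adjMatrix ℝ i j) := by
  rw [dist_eq_norm, norm_sub_sq_real, ← real_inner_self_eq_norm_sq,
    ← real_inner_self_eq_norm_sq, real_inner_srgCol, real_inner_srgCol, real_inner_srgCol,
    hG.sub_smul_one_mul_self hs]
  simp only [Matrix.add_apply, Matrix.smul_apply, Matrix.sub_apply, one_apply_eq, one_apply_ne hij,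
    SimpleGraph.adjMatrix_apply, G.loopless.irrefl, if_false, of_apply, Pi.one_apply, smul_eq_mul]
  ring

theorem dist_srgCol_eq_diam_of_isSRGWith (hG : G.IsSRGWith v k l m) {s : ℝ}
    (hs : s ^ 2 = (l - m) * s + (k - m)) (hd : 0 < (l : ℝ) - m - 2 * s) {i j : V}
    (hij : i ≠ j) (h : ¬G.Adj i j) :
    dist (srgCol G s i) (srgCol G s j) = Metric.diam (Set.range (srgCol G s)) := by
  refine le_antisymm (Metric.dist_le_diam_of_mem (Set.finite_range _).isBounded
    ⟨i, rfl⟩ ⟨j, rfl⟩) (Metric.diam_le_of_forall_dist_le dist_nonneg ?_)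
  rintro _ ⟨a, rfl⟩ _ ⟨b, rfl⟩
  rcases eq_or_ne a b with rfl | hab
  · simp
  refine (pow_le_pow_iff_left₀ dist_nonneg dist_nonneg two_ne_zero).1 ?_
  rw [dist_sq_srgCol_of_isSRGWith hG hs hab, dist_sq_srgCol_of_isSRGWith hG hs hij,
    SimpleGraph.adjMatrix_apply, SimpleGraph.adjMatrix_apply, if_neg h]
  split_ifs <;> nlinarith

end SrgCol

theorem stmt_16_general {V : Type*} [Fintype V] [DecidableEq V]
    (G : SimpleGraph V) [DecidableRel G.Adj] (v k l m : ℕ)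
    (hG : G.IsSRGWith v k l m)
    (hedge : ∃ i j : V, G.Adj i j)
    (hnonadj : ∃ i j : V, i ≠ j ∧ ¬G.Adj i j)
    (s : ℝ)
    (hs : s = ((l : ℝ) - m - Real.sqrt (((l : ℝ) - m) ^ 2 + 4 * ((k : ℝ) - m))) / 2)
    (f : ℕ)
    (hf : (f : ℝ) =
      ((v : ℝ) - 1 - (2 * (k : ℝ) + ((v : ℝ) - 1) * ((l : ℝ) - m)) /
          Real.sqrt (((l : ℝ) - m) ^ 2 + 4 * ((k : ℝ) - m))) / 2)
    (hcl : ¬∃ Q : Fin (f + 1) → Set V,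
        (Set.univ : Set V) = ⋃ a, Q a ∧ ∀ a, G.IsClique (Q a)) :
    adim (Set.range (srgCol G s)) = f ∧
    ¬∃ F : Fin (f + 1) → Set (EuclideanSpace ℝ V),
        Set.range (srgCol G s) = ⋃ a, F a ∧
        ∀ a, Metric.diam (F a) < Metric.diam (Set.range (srgCol G s)) := by
  obtain ⟨i₀, j₀, hadj⟩ := hedge
  obtain ⟨i₁, j₁, hne, hnadj⟩ := hnonadj
  have : Nonempty V := ⟨i₀⟩
  have hdisc := hG.discr_pos hadj hne hnadj
  set d := Real.sqrt (((l : ℝ) - m) ^ 2 + 4 * ((k : ℝ) - m))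
  have hd : 0 < d := Real.sqrt_pos.2 hdisc
  have hsd : (l : ℝ) - m - 2 * s = d := by rw [hs]; ring
  have hroot : s ^ 2 = (l - m) * s + (k - m) := by
    rw [hs]; linear_combination Real.sq_sqrt hdisc.le / 4
  refine ⟨?_, fun ⟨F, hF, hFd⟩ => hcl (exists_isClique_cover_of_diam_lt G
    (fun i j hij h => dist_srgCol_eq_diam_of_isSRGWith hG hroot (hsd ▸ hd) hij h) hF hFd)⟩
  have hdim := hG.finrank_vectorSpan_range_col hadj hroot (hsd ▸ hd.ne')
  rw [← adim_range_srgCol, hsd] at hdim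
  have hfd : (-(s * (v - 1)) - k) / d = f := by
    rw [hf, hs]; field_simp; ring
  exact_mod_cast hdim.trans hfd

theorem stmt_16 {V : Type*} [Fintype V] [DecidableEq V]
    (G : SimpleGraph V) [DecidableRel G.Adj] (v k l m : ℕ)
    (hG : G.IsSRGWith v k l m) (hm : 1 ≤ m)
    (hedge : ∃ i j : V, G.Adj i j)
    (hnonadj : ∃ i j : V, i ≠ j ∧ ¬G.Adj i j)
    (s : ℝ)
    (hs : s = ((l : ℝ) - m - Real.sqrt (((l : ℝ) - m) ^ 2 + 4 * ((k : ℝ) - m))) / 2)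
    (f : ℕ)
    (hf : (f : ℝ) =
      ((v : ℝ) - 1 - (2 * (k : ℝ) + ((v : ℝ) - 1) * ((l : ℝ) - m)) /
          Real.sqrt (((l : ℝ) - m) ^ 2 + 4 * ((k : ℝ) - m))) / 2)
    (hcl : ¬∃ Q : Fin (f + 1) → Set V,
        (Set.univ : Set V) = ⋃ a, Q a ∧ ∀ a, G.IsClique (Q a)) :
    adim (Set.range (srgCol G s)) = f ∧
    ¬∃ F : Fin (f + 1) → Set (EuclideanSpace ℝ V),
        Set.range (srgCol G s) = ⋃ a, F a ∧
        ∀ a, Metric.diam (F a) < Metric.diam (Set.range (srgCol G s)) :=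
  stmt_16_general G v k l m hG hedge hnonadj s hs f hf hcl
end
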